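/- Let T > 0, H = ℝᴺ, X = H × H, and let J be the symplectic operator J(p,q) = (−q, p) on X. Define F(u) = ∫₀ᵀ ⟨J u̇(t), u(t)⟩ dt + ⟨u(T) − u(0), J (u(T)+u(0))/2⟩ on A²_X. Then F is weakly continuous: if (u_k) is a sequence in A²_X and u ∈ A²_X are such that (u_k(0)+u_k(T))/2 → (u(0)+u(T))/2 and u̇_k ⇀ u̇ weakly in L²(0,T;X), then F(u_k) → F(u). -/

import Mathlib

open MeasureTheory Set Filter Topology RealInnerProductSpace

noncomputable section

/-- `u` is an absolutely continuous path on `[0,T]` with derivative `u'` in `L²(0,T;F)`. -/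
def InA2 {F : Type*} [NormedAddCommGroup F] [NormedSpace ℝ F]
    (T : ℝ) (u u' : ℝ → F) : Prop :=
  MemLp u' 2 (volume.restrict (Set.Ioc (0:ℝ) T)) ∧
  ∀ t ∈ Set.Icc (0:ℝ) T, u t = u 0 + ∫ s in (0:ℝ)..t, u' s

variable {H : Type*} [NormedAddCommGroup H] [InnerProductSpace ℝ H]

/-- The symplectic operator `J(p,q) = (-q,p)` on `X = H × H`. -/
def Jmap (a : H × H) : H × H := (-a.2, a.1)

/-- The inner product on `X = H × H`. -/
def pinX (a b : H × H) : ℝ := ⟪a.1, b.1⟫ + ⟪a.2, b.2⟫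

/-- The functional `F(u) = ∫₀ᵀ ⟨Ju̇,u⟩ dt + ⟨u(T)-u(0), J(u(T)+u(0))/2⟩` on `A²_X`. -/
def Ffun (T : ℝ) (u u' : ℝ → H × H) : ℝ :=
  (∫ t in Set.Ioc (0:ℝ) T, pinX (Jmap (u' t)) (u t)) +
    pinX (u T - u 0) (Jmap ((2:ℝ)⁻¹ • (u T + u 0)))

/-!
`F(u)` depends only on `u̇`: on `(0,T]` we have `u = m + P u̇`, where `m = (u(0)+u(T))/2` and
`P h(t) = ∫₀ᵗ h - ½ ∫₀ᵀ h`, and since `J` is skew the contributions of the constant `m` to the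
integral and to the boundary term cancel, leaving `F(u) = ∫₀ᵀ ⟨J u̇, P u̇⟩`.
If `u̇_k ⇀ u̇` in `L²`, the `u̇_k` are bounded in `L²` (uniform boundedness), hence the `P u̇_k`
are uniformly bounded; they converge pointwise, since `⟨c, ∫₀ᵗ u̇_k⟩` is the pairing of `u̇_k`
with `c · 1_(0,t]` and `H` is finite dimensional. By dominated convergence `P u̇_k → P u̇`
strongly in `L²`, and a weakly convergent sequence paired with a strongly convergent one
converges.
-/

section Hilbert

variable {E : Type*} [NormedAddCommGroup E] [InnerProductSpace ℝ E]

theorem exists_norm_le_of_tendsto_inner [CompleteSpace E] {x : ℕ → E} {x₀ : E}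
    (h : ∀ w, Tendsto (fun k => ⟪x k, w⟫) atTop (𝓝 ⟪x₀, w⟫)) : ∃ M, ∀ k, ‖x k‖ ≤ M := by
  obtain ⟨M, hM⟩ := banach_steinhaus (g := fun k => innerSL ℝ (x k)) fun w => by
    obtain ⟨c, hc⟩ := (h w).norm.bddAbove_range
    exact ⟨c, fun k => hc ⟨k, rfl⟩⟩
  exact ⟨M, fun k => by simpa only [innerSL_apply_norm] using hM k⟩

theorem tendsto_inner_of_weak_of_tendsto [CompleteSpace E] {x y : ℕ → E} {x₀ y₀ : E}
    (hx : ∀ w, Tendsto (fun k => ⟪x k, w⟫) atTop (𝓝 ⟪x₀, w⟫)) (hy : Tendsto y atTop (𝓝 y₀)) :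
    Tendsto (fun k => ⟪x k, y k⟫) atTop (𝓝 ⟪x₀, y₀⟫) := by
  obtain ⟨M, hM⟩ := exists_norm_le_of_tendsto_inner hx
  have hsmall : Tendsto (fun k => ⟪x k, y k - y₀⟫) atTop (𝓝 0) := by
    refine squeeze_zero_norm (fun k => (norm_inner_le_norm _ _).trans
      (mul_le_mul_of_nonneg_right (hM k) (norm_nonneg _))) ?_
    simpa using (tendsto_iff_norm_sub_tendsto_zero.1 hy).const_mul M
  simpa [inner_sub_right] using hsmall.add (hx y₀)

theorem tendsto_of_forall_tendsto_inner [FiniteDimensional ℝ E] {ι : Type*} {l : Filter ι}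
    {x : ι → E} {x₀ : E} (h : ∀ c, Tendsto (fun k => ⟪c, x k⟫) l (𝓝 ⟪c, x₀⟫)) :
    Tendsto x l (𝓝 x₀) := by
  let b := stdOrthonormalBasis ℝ E
  simpa only [b.sum_repr'] using tendsto_finsetSum Finset.univ fun i _ => (h (b i)).smul_const (b i)

end Hilbert

section Lp

variable {α E : Type*} [MeasurableSpace α] {μ : Measure α}
  [NormedAddCommGroup E] [InnerProductSpace ℝ E] [CompleteSpace E]

theorem MeasureTheory.Lp.norm_setIntegral_le (F : Lp E 2 μ) {s : Set α} (hs : MeasurableSet s)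
    (hμs : μ s ≠ ⊤) : ‖∫ x in s, F x ∂μ‖ ≤ μ.real s ^ (1 / 2 : ℝ) * ‖F‖ := by
  set v := ∫ x in s, F x ∂μ
  have hsq : ‖v‖ * ‖v‖ ≤ ‖v‖ * (μ.real s ^ (1 / 2 : ℝ) * ‖F‖) :=
    calc ‖v‖ * ‖v‖ = ⟪indicatorConstLp 2 hs hμs v, F⟫ := by
          rw [L2.inner_indicatorConstLp_eq_inner_setIntegral, real_inner_self_eq_norm_mul_norm]
      _ ≤ ‖indicatorConstLp 2 hs hμs v‖ * ‖F‖ := real_inner_le_norm _ _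
      _ = ‖v‖ * (μ.real s ^ (1 / 2 : ℝ) * ‖F‖) := by
          rw [norm_indicatorConstLp two_ne_zero ENNReal.ofNat_ne_top, ENNReal.toReal_ofNat,
            mul_assoc]
  rcases (norm_nonneg v).eq_or_lt with hv | hv
  · rw [← hv]; positivity
  · exact le_of_mul_le_mul_left hsq hv

theorem MeasureTheory.Lp.tendsto_setIntegral_of_tendsto_inner [FiniteDimensional ℝ E]
    {F : ℕ → Lp E 2 μ} {G : Lp E 2 μ} (h : ∀ W, Tendsto (fun k => ⟪F k, W⟫) atTop (𝓝 ⟪G, W⟫)) {s : Set α}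
    (hs : MeasurableSet s) (hμs : μ s ≠ ⊤) :
    Tendsto (fun k => ∫ x in s, F k x ∂μ) atTop (𝓝 (∫ x in s, G x ∂μ)) := by
  refine tendsto_of_forall_tendsto_inner fun c => ?_
  simp only [← L2.inner_indicatorConstLp_eq_inner_setIntegral ℝ hs hμs c]
  simpa only [real_inner_comm (indicatorConstLp 2 hs hμs c)] using h (indicatorConstLp 2 hs hμs c)

end Lp

theorem tendsto_toLp_of_tendsto_ae_of_norm_le {α E : Type*} [MeasurableSpace α] {μ : Measure α}
    [NormedAddCommGroup E] [IsFiniteMeasure μ] {p : ENNReal} [Fact (1 ≤ p)] (hp : p ≠ ⊤)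
    {f : ℕ → α → E} {g : α → E} (hf : ∀ n, MemLp (f n) p μ) (hg : MemLp g p μ) {C : ℝ}
    (hC : ∀ n, ∀ᵐ x ∂μ, ‖f n x‖ ≤ C)
    (hlim : ∀ᵐ x ∂μ, Tendsto (fun n => f n x) atTop (𝓝 (g x))) :
    Tendsto (fun n => (hf n).toLp (f n)) atTop (𝓝 (hg.toLp g)) := by
  rw [Lp.tendsto_Lp_iff_tendsto_eLpNorm'']
  refine tendsto_Lp_finite_of_tendsto_ae Fact.out hp (fun n => (hf n).1) hg ?_ hlim
  refine unifIntegrable_of Fact.out hp (fun n => (hf n).1) fun ε _ => ⟨C.toNNReal + 1, fun n => ?_⟩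
  have hzero : {x | C.toNNReal + 1 ≤ ‖f n x‖₊}.indicator (f n) =ᵐ[μ] 0 := by
    filter_upwards [hC n] with x hx
    refine indicator_of_notMem (fun hle => ?_) _
    have : (C.toNNReal : ℝ) + 1 ≤ ‖f n x‖ := by exact_mod_cast hle
    linarith [C.le_coe_toNNReal]
  rw [eLpNorm_congr_ae hzero, eLpNorm_zero]
  positivity

theorem ContinuousLinearEquiv.intervalIntegral_comp_comm {E F : Type*} [NormedAddCommGroup E]
    [NormedSpace ℝ E] [NormedAddCommGroup F] [NormedSpace ℝ F] (L : E ≃L[ℝ] F) (f : ℝ → E)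
    (a b : ℝ) : ∫ x in a..b, L (f x) = L (∫ x in a..b, f x) := by
  simp only [intervalIntegral, L.integral_comp_comm, map_sub]

section CenteredPrimitive

variable {E : Type*} [NormedAddCommGroup E] [NormedSpace ℝ E] {T t : ℝ}

def centeredPrimitive (T : ℝ) (f : ℝ → E) (t : ℝ) : E :=
  (∫ s in (0 : ℝ)..t, f s) - (2 : ℝ)⁻¹ • ∫ s in (0 : ℝ)..T, f s

theorem continuousOn_centeredPrimitive (hT : 0 ≤ T) {f : ℝ → E}
    (hf : IntegrableOn f (Ioc 0 T)) : ContinuousOn (centeredPrimitive T f) (Icc 0 T) := by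
  have hf' : IntegrableOn f (uIcc 0 T) := by
    rwa [uIcc_of_le hT, integrableOn_Icc_iff_integrableOn_Ioc]
  have := intervalIntegral.continuousOn_primitive_interval hf'
  rw [uIcc_of_le hT] at this
  exact this.sub continuousOn_const

theorem intervalIntegral_eq_setIntegral_restrict (f : ℝ → E) (ht : t ∈ Icc 0 T) :
    ∫ s in (0 : ℝ)..t, f s = ∫ s in Ioc 0 t, f s ∂(volume.restrict (Ioc 0 T)) := by
  rw [intervalIntegral.integral_of_le ht.1, Measure.restrict_restrict measurableSet_Ioc,
    inter_eq_left.2 (Ioc_subset_Ioc_right ht.2)]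

theorem centeredPrimitive_eq_setIntegral_toLp {p : ENNReal} {f : ℝ → E}
    (hf : MemLp f p (volume.restrict (Ioc 0 T))) (ht : t ∈ Icc 0 T) :
    centeredPrimitive T f t =
      (∫ s in Ioc 0 t, hf.toLp f s ∂(volume.restrict (Ioc 0 T))) -
        (2 : ℝ)⁻¹ • ∫ s in Ioc 0 T, hf.toLp f s ∂(volume.restrict (Ioc 0 T)) := by
  have key : ∀ r ∈ Icc 0 T,
      ∫ s in (0 : ℝ)..r, f s = ∫ s in Ioc 0 r, hf.toLp f s ∂(volume.restrict (Ioc 0 T)) :=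
    fun r hr => (intervalIntegral_eq_setIntegral_restrict f hr).trans
      (integral_congr_ae (ae_restrict_of_ae hf.coeFn_toLp.symm))
  rw [centeredPrimitive, key t ht, key T ⟨ht.1.trans ht.2, le_rfl⟩]

end CenteredPrimitive

section CenteredPrimitiveL2

variable {E : Type*} [NormedAddCommGroup E] [InnerProductSpace ℝ E] [CompleteSpace E] {T t : ℝ}

theorem norm_centeredPrimitive_le {f : ℝ → E} (hf : MemLp f 2 (volume.restrict (Ioc 0 T)))
    (ht : t ∈ Icc 0 T) :
    ‖centeredPrimitive T f t‖ ≤ 3 / 2 * (T ^ (1 / 2 : ℝ) * ‖hf.toLp f‖) := by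
  have hT : 0 ≤ T := ht.1.trans ht.2
  have hint : ∀ r ∈ Icc 0 T, ‖∫ s in Ioc 0 r, hf.toLp f s ∂(volume.restrict (Ioc 0 T))‖ ≤
      T ^ (1 / 2 : ℝ) * ‖hf.toLp f‖ := by
    intro r _
    refine (Lp.norm_setIntegral_le _ measurableSet_Ioc (measure_ne_top _ _)).trans ?_
    gcongr
    calc (volume.restrict (Ioc 0 T)).real (Ioc 0 r)
        ≤ (volume.restrict (Ioc 0 T)).real univ := measureReal_mono (subset_univ _)
      _ = T := by rw [measureReal_restrict_apply_univ, Real.volume_real_Ioc_of_le hT, sub_zero]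
  rw [centeredPrimitive_eq_setIntegral_toLp hf ht]
  refine (norm_sub_le _ _).trans ?_
  rw [norm_smul, norm_inv, Real.norm_two]
  linarith [hint t ht, hint T ⟨hT, le_rfl⟩]

theorem memLp_centeredPrimitive (hT : 0 ≤ T) {f : ℝ → E}
    (hf : MemLp f 2 (volume.restrict (Ioc 0 T))) (p : ENNReal) :
    MemLp (centeredPrimitive T f) p (volume.restrict (Ioc 0 T)) := by
  refine MemLp.of_bound ?_ _ ((ae_restrict_iff' measurableSet_Ioc).2
    (Eventually.of_forall fun t ht => norm_centeredPrimitive_le hf (Ioc_subset_Icc_self ht)))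
  exact ((continuousOn_centeredPrimitive hT (hf.integrable one_le_two)).mono
    Ioc_subset_Icc_self).aestronglyMeasurable measurableSet_Ioc

theorem tendsto_centeredPrimitive [FiniteDimensional ℝ E] {f : ℕ → ℝ → E} {g : ℝ → E}
    (hf : ∀ k, MemLp (f k) 2 (volume.restrict (Ioc 0 T)))
    (hg : MemLp g 2 (volume.restrict (Ioc 0 T)))
    (hweak : ∀ W, Tendsto (fun k => ⟪(hf k).toLp (f k), W⟫) atTop (𝓝 ⟪hg.toLp g, W⟫))
    (ht : t ∈ Icc 0 T) :
    Tendsto (fun k => centeredPrimitive T (f k) t) atTop (𝓝 (centeredPrimitive T g t)) := by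
  simp only [centeredPrimitive_eq_setIntegral_toLp (hf _) ht,
    centeredPrimitive_eq_setIntegral_toLp hg ht]
  exact (Lp.tendsto_setIntegral_of_tendsto_inner hweak measurableSet_Ioc (measure_ne_top _ _)).sub
    ((Lp.tendsto_setIntegral_of_tendsto_inner hweak measurableSet_Ioc
      (measure_ne_top _ _)).const_smul _)

end CenteredPrimitiveL2

theorem MeasureTheory.MemLp.integrable_inner {α E : Type*} [MeasurableSpace α] {μ : Measure α}
    [NormedAddCommGroup E] [InnerProductSpace ℝ E] {f g : α → E}
    (hf : MemLp f 2 μ) (hg : MemLp g 2 μ) : Integrable (fun x => ⟪f x, g x⟫) μ :=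
  (L2.integrable_inner (hf.toLp f) (hg.toLp g)).congr <| by
    filter_upwards [hf.coeFn_toLp, hg.coeFn_toLp] with x hfx hgx
    rw [hfx, hgx]

theorem integral_inner_centeredPrimitive_eq {E : Type*} [NormedAddCommGroup E]
    [InnerProductSpace ℝ E] [CompleteSpace E] {T : ℝ} (hT : 0 ≤ T) (A : E →L[ℝ] E)
    (hA : ∀ a b, ⟪A a, b⟫ = -⟪a, A b⟫) {U f : ℝ → E}
    (hf : MemLp f 2 (volume.restrict (Ioc 0 T)))
    (hU : ∀ t ∈ Icc 0 T, U t = U 0 + ∫ s in (0 : ℝ)..t, f s) :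
    (∫ t in Ioc 0 T, ⟪A (f t), U t⟫) + ⟪U T - U 0, A ((2 : ℝ)⁻¹ • (U T + U 0))⟫ =
      ∫ t in Ioc 0 T, ⟪A (f t), centeredPrimitive T f t⟫ := by
  have hUT : U T = U 0 + ∫ s in (0 : ℝ)..T, f s := hU T ⟨hT, le_rfl⟩
  set m := (2 : ℝ)⁻¹ • (U T + U 0) with hm
  have hsplit : ∀ t ∈ Ioc 0 T, U t = centeredPrimitive T f t + m := by
    intro t ht
    rw [hU t (Ioc_subset_Icc_self ht), centeredPrimitive, hm, hUT]
    module
  have hAf : Integrable (fun t => A (f t)) (volume.restrict (Ioc 0 T)) :=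
    A.integrable_comp (hf.integrable one_le_two)
  have hconst : ∫ t in Ioc 0 T, ⟪A (f t), m⟫ = -⟪U T - U 0, A m⟫ := by
    simp only [real_inner_comm m, integral_inner hAf,
      A.integral_comp_comm (hf.integrable one_le_two), ← intervalIntegral.integral_of_le hT]
    rw [hUT, add_sub_cancel_left, real_inner_comm, hA]
  calc (∫ t in Ioc 0 T, ⟪A (f t), U t⟫) + ⟪U T - U 0, A m⟫
      = (∫ t in Ioc 0 T, ⟪A (f t), centeredPrimitive T f t⟫ + ⟪A (f t), m⟫) +
          ⟪U T - U 0, A m⟫ := by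
        rw [setIntegral_congr_fun measurableSet_Ioc fun t ht => by
          rw [hsplit t ht, inner_add_right]]
    _ = ∫ t in Ioc 0 T, ⟪A (f t), centeredPrimitive T f t⟫ := by
        rw [integral_add ((hf.continuousLinearMap_comp A).integrable_inner
          (memLp_centeredPrimitive hT hf 2)) (hAf.inner_const m), hconst]
        ring

theorem tendsto_integral_inner_centeredPrimitive {E : Type*} [NormedAddCommGroup E]
    [InnerProductSpace ℝ E] [FiniteDimensional ℝ E] {T : ℝ} (hT : 0 ≤ T) (C : E →L[ℝ] E)
    {f : ℕ → ℝ → E} {g : ℝ → E} (hf : ∀ k, MemLp (f k) 2 (volume.restrict (Ioc 0 T)))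
    (hg : MemLp g 2 (volume.restrict (Ioc 0 T)))
    (hweak : ∀ W, Tendsto (fun k => ⟪(hf k).toLp (f k), W⟫) atTop (𝓝 ⟪hg.toLp g, W⟫)) :
    Tendsto (fun k => ∫ t in Ioc 0 T, ⟪f k t, C (centeredPrimitive T (f k) t)⟫) atTop
      (𝓝 (∫ t in Ioc 0 T, ⟪g t, C (centeredPrimitive T g t)⟫)) := by
  have hCP : ∀ {h : ℝ → E}, MemLp h 2 (volume.restrict (Ioc 0 T)) →
      MemLp (fun t => C (centeredPrimitive T h t)) 2 (volume.restrict (Ioc 0 T)) :=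
    fun hh => (memLp_centeredPrimitive hT hh 2).continuousLinearMap_comp C
  have hinner : ∀ {h : ℝ → E} (hh : MemLp h 2 (volume.restrict (Ioc 0 T))),
      ∫ t in Ioc 0 T, ⟪h t, C (centeredPrimitive T h t)⟫ = ⟪hh.toLp h, (hCP hh).toLp _⟫ := by
    intro h hh
    rw [L2.inner_def]
    refine integral_congr_ae ?_
    filter_upwards [hh.coeFn_toLp, (hCP hh).coeFn_toLp] with t h1 h2
    rw [h1, h2]
  obtain ⟨M, hM⟩ := exists_norm_le_of_tendsto_inner hweak
  have hbound : ∀ k, ∀ᵐ t ∂(volume.restrict (Ioc 0 T)),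
      ‖C (centeredPrimitive T (f k) t)‖ ≤ ‖C‖ * (3 / 2 * (T ^ (1 / 2 : ℝ) * M)) := by
    refine fun k => (ae_restrict_iff' measurableSet_Ioc).2 (Eventually.of_forall fun t ht => ?_)
    refine C.le_opNorm_of_le ((norm_centeredPrimitive_le (hf k) (Ioc_subset_Icc_self ht)).trans ?_)
    gcongr
    exact hM k
  have hlim : ∀ᵐ t ∂(volume.restrict (Ioc 0 T)), Tendsto
      (fun k => C (centeredPrimitive T (f k) t)) atTop (𝓝 (C (centeredPrimitive T g t))) :=
    (ae_restrict_iff' measurableSet_Ioc).2 (Eventually.of_forall fun t ht =>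
      (C.continuous.tendsto _).comp
        (tendsto_centeredPrimitive hf hg hweak (Ioc_subset_Icc_self ht)))
  simp only [hinner (hf _), hinner hg]
  exact tendsto_inner_of_weak_of_tendsto hweak (tendsto_toLp_of_tendsto_ae_of_norm_le
    ENNReal.ofNat_ne_top (fun k => hCP (hf k)) (hCP hg) hbound hlim)

theorem MeasureTheory.MemLp.withLp_toLp {α : Type*} [MeasurableSpace α] {μ : Measure α}
    {p : ENNReal} {h : α → H × H} (hh : MemLp h p μ) :
    MemLp (fun t => WithLp.toLp 2 (h t)) p μ :=
  hh.continuousLinearMap_comp (WithLp.prodContinuousLinearEquiv 2 ℝ H H).symm.toContinuousLinearMap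

-- `pinX` is the inner product of `WithLp 2 (H × H)`, on which `Jmap` is a skew-adjoint operator.
def symplecticL : WithLp 2 (H × H) →L[ℝ] WithLp 2 (H × H) :=
  (WithLp.prodContinuousLinearEquiv 2 ℝ H H).symm.toContinuousLinearMap ∘L
    (-ContinuousLinearMap.snd ℝ H H).prod (ContinuousLinearMap.fst ℝ H H) ∘L
      (WithLp.prodContinuousLinearEquiv 2 ℝ H H).toContinuousLinearMap

theorem inner_symplecticL_left (a b : WithLp 2 (H × H)) :
    ⟪symplecticL a, b⟫ = -⟪a, symplecticL b⟫ := by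
  simp [symplecticL, WithLp.prod_inner_apply, real_inner_comm]

theorem Ffun_eq_integral_inner_centeredPrimitive [CompleteSpace H] {T : ℝ} (hT : 0 ≤ T)
    {u u' : ℝ → H × H} (hu : InA2 T u u') :
    Ffun T u u' = -∫ t in Ioc 0 T, ⟪WithLp.toLp 2 (u' t),
      symplecticL (centeredPrimitive T (fun s => WithLp.toLp 2 (u' s)) t)⟫ := by
  let ψ := (WithLp.prodContinuousLinearEquiv 2 ℝ H H).symm
  have hU : ∀ t ∈ Icc 0 T, ψ (u t) = ψ (u 0) + ∫ s in (0 : ℝ)..t, ψ (u' s) := fun t ht => by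
    rw [hu.2 t ht, map_add, ψ.intervalIntegral_comp_comm]
  simp only [← integral_neg, ← inner_symplecticL_left]
  -- `Ffun T u u'` is, by definition, the left-hand side read in `WithLp 2 (H × H)`.
  exact Eq.trans rfl (integral_inner_centeredPrimitive_eq hT symplecticL inner_symplecticL_left
    hu.1.withLp_toLp hU)

theorem tendsto_inner_toLp_of_tendsto_integral_pinX {T : ℝ} {u' : ℕ → ℝ → H × H}
    {v' : ℝ → H × H}
    (hf : ∀ k, MemLp (fun t => WithLp.toLp 2 (u' k t)) 2 (volume.restrict (Ioc 0 T)))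
    (hg : MemLp (fun t => WithLp.toLp 2 (v' t)) 2 (volume.restrict (Ioc 0 T)))
    (hweak : ∀ w : ℝ → H × H, MemLp w 2 (volume.restrict (Ioc 0 T)) →
      Tendsto (fun k => ∫ t in Ioc 0 T, pinX (u' k t) (w t)) atTop
        (𝓝 (∫ t in Ioc 0 T, pinX (v' t) (w t))))
    (W : Lp (WithLp 2 (H × H)) 2 (volume.restrict (Ioc 0 T))) :
    Tendsto (fun k => ⟪(hf k).toLp _, W⟫) atTop (𝓝 ⟪hg.toLp _, W⟫) := by
  have hinner : ∀ {h : ℝ → H × H}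
      (hh : MemLp (fun t => WithLp.toLp 2 (h t)) 2 (volume.restrict (Ioc 0 T))),
      ⟪hh.toLp _, W⟫ = ∫ t in Ioc 0 T, pinX (h t) (WithLp.ofLp (W t)) := by
    intro h hh
    rw [L2.inner_def]
    refine integral_congr_ae ?_
    filter_upwards [hh.coeFn_toLp] with t ht
    rw [ht]
    rfl
  simp only [hinner]
  exact hweak _ ((Lp.memLp W).continuousLinearMap_comp
    (WithLp.prodContinuousLinearEquiv 2 ℝ H H).toContinuousLinearMap)

theorem F_weakly_continuous_general (N : ℕ) (T : ℝ) (hT : 0 < T)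
    (u : ℕ → ℝ → EuclideanSpace ℝ (Fin N) × EuclideanSpace ℝ (Fin N))
    (u' : ℕ → ℝ → EuclideanSpace ℝ (Fin N) × EuclideanSpace ℝ (Fin N))
    (v v' : ℝ → EuclideanSpace ℝ (Fin N) × EuclideanSpace ℝ (Fin N))
    (hk : ∀ k, InA2 T (u k) (u' k)) (hv : InA2 T v v')
    (hweak : ∀ w : ℝ → EuclideanSpace ℝ (Fin N) × EuclideanSpace ℝ (Fin N),
      MemLp w 2 (volume.restrict (Set.Ioc (0:ℝ) T)) →
      Tendsto (fun k => ∫ t in Set.Ioc (0:ℝ) T, pinX (u' k t) (w t)) atTop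
        (nhds (∫ t in Set.Ioc (0:ℝ) T, pinX (v' t) (w t)))) :
    Tendsto (fun k => Ffun T (u k) (u' k)) atTop (nhds (Ffun T v v')) := by
  have hf := fun k => (hk k).1.withLp_toLp
  have hg := hv.1.withLp_toLp
  have hlim := tendsto_integral_inner_centeredPrimitive hT.le symplecticL hf hg
    (tendsto_inner_toLp_of_tendsto_integral_pinX hf hg hweak)
  simp only [Ffun_eq_integral_inner_centeredPrimitive hT.le (hk _),
    Ffun_eq_integral_inner_centeredPrimitive hT.le hv]
  exact hlim.neg

/-- For `H = ℝᴺ` and `X = H × H`, the functional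
`F(u) = ∫₀ᵀ ⟨Ju̇,u⟩ dt + ⟨u(T)-u(0), J(u(T)+u(0))/2⟩` is weakly continuous on `A²_X`:
if the midpoints converge and the derivatives converge weakly in `L²(0,T;X)`
then `F(u_k) → F(u)`. -/
theorem F_weakly_continuous (N : ℕ) (T : ℝ) (hT : 0 < T)
    (u : ℕ → ℝ → EuclideanSpace ℝ (Fin N) × EuclideanSpace ℝ (Fin N))
    (u' : ℕ → ℝ → EuclideanSpace ℝ (Fin N) × EuclideanSpace ℝ (Fin N))
    (v v' : ℝ → EuclideanSpace ℝ (Fin N) × EuclideanSpace ℝ (Fin N))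
    (hk : ∀ k, InA2 T (u k) (u' k)) (hv : InA2 T v v')
    (hmid : Tendsto (fun k => (2:ℝ)⁻¹ • (u k 0 + u k T)) atTop
      (nhds ((2:ℝ)⁻¹ • (v 0 + v T))))
    (hweak : ∀ w : ℝ → EuclideanSpace ℝ (Fin N) × EuclideanSpace ℝ (Fin N),
      MemLp w 2 (volume.restrict (Set.Ioc (0:ℝ) T)) →
      Tendsto (fun k => ∫ t in Set.Ioc (0:ℝ) T, pinX (u' k t) (w t)) atTop
        (nhds (∫ t in Set.Ioc (0:ℝ) T, pinX (v' t) (w t)))) :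
    Tendsto (fun k => Ffun T (u k) (u' k)) atTop (nhds (Ffun T v v')) :=
  F_weakly_continuous_general N T hT u u' v v' hk hv hweak
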